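/- arXiv:2605.03357 — 2 statements merged into one kernel-verified Lean document; each statement's English description precedes it below -/
import Mathlib

section
/- Let X, A be finite sets, H ∈ ℕ, r_max, δ ≥ 0. Suppose r : X × A × ℕ → ℝ satisfies |r(x,a,n)| ≤ r_max, and suppose μ_n, μ'_n are time-indexed state-action distributions with recursive structure: the state marginals ρ_n, ρ'_n satisfy ρ_0 = ρ'_0 and ∑_x |ρ_{n+1}(x) − ρ'_{n+1}(x)| ≤ ∑_x |ρ_n(x) − ρ'_n(x)| + δ, and the joints satisfy ∑_{x,a}|μ_n(x,a) − μ'_n(x,a)| ≤ ∑_x |ρ_n(x) − ρ'_n(x)| + δ. Then |∑_{n<H}∑_{x,a} μ_n r − ∑_{n<H}∑_{x,a} μ'_n r| ≤ H²·δ·r_max. -/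
open Finset

theorem bc_performance_bound {X A : Type*} [Fintype X] [Fintype A]
    (H : ℕ) (rmax δ : ℝ) (hrmax : 0 ≤ rmax) (hδ : 0 ≤ δ)
    (r : X → A → ℕ → ℝ) (hr : ∀ x a n, |r x a n| ≤ rmax)
    (ρ ρ' : ℕ → X → ℝ) (μ μ' : ℕ → X → A → ℝ)
    (h0 : ρ 0 = ρ' 0)
    (hrec : ∀ n < H, ∑ x, |ρ (n + 1) x - ρ' (n + 1) x| ≤
      ∑ x, |ρ n x - ρ' n x| + δ)
    (hjoint : ∀ n < H, ∑ x, ∑ a, |μ n x a - μ' n x a| ≤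
      ∑ x, |ρ n x - ρ' n x| + δ) :
    |(∑ n ∈ Finset.range H, ∑ x, ∑ a, μ n x a * r x a n) -
     (∑ n ∈ Finset.range H, ∑ x, ∑ a, μ' n x a * r x a n)| ≤
      (H : ℝ) ^ 2 * δ * rmax := by
  -- state marginal bound
  have hρ : ∀ n ≤ H, ∑ x, |ρ n x - ρ' n x| ≤ n * δ := by
    intro n hn
    induction n with
    | zero => simp [h0]
    | succ k ih =>
      have hk : k < H := Nat.lt_of_succ_le hn
      calc ∑ x, |ρ (k + 1) x - ρ' (k + 1) x| ≤ ∑ x, |ρ k x - ρ' k x| + δ :=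
            hrec k hk
        _ ≤ k * δ + δ := by linarith [ih (le_of_lt hk)]
        _ = (k + 1 : ℕ) * δ := by push_cast; ring
  -- per-step bound
  have hstep : ∀ n < H, |(∑ x, ∑ a, μ n x a * r x a n) -
      (∑ x, ∑ a, μ' n x a * r x a n)| ≤ ((n : ℝ) + 1) * δ * rmax := by
    intro n hn
    have h1 : |(∑ x, ∑ a, μ n x a * r x a n) - (∑ x, ∑ a, μ' n x a * r x a n)|
        ≤ ∑ x, ∑ a, |μ n x a - μ' n x a| * rmax := by
      rw [← Finset.sum_sub_distrib]
      refine (Finset.abs_sum_le_sum_abs _ _).trans (Finset.sum_le_sum fun x _ => ?_)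
      rw [← Finset.sum_sub_distrib]
      refine (Finset.abs_sum_le_sum_abs _ _).trans (Finset.sum_le_sum fun a _ => ?_)
      have : μ n x a * r x a n - μ' n x a * r x a n
          = (μ n x a - μ' n x a) * r x a n := by ring
      rw [this, abs_mul]
      exact mul_le_mul_of_nonneg_left (hr x a n) (abs_nonneg _)
    have h2 : ∑ x, ∑ a, |μ n x a - μ' n x a| * rmax
        = (∑ x, ∑ a, |μ n x a - μ' n x a|) * rmax := by
      simp [Finset.sum_mul]
    have h3 : (∑ x, ∑ a, |μ n x a - μ' n x a|) ≤ (n : ℝ) * δ + δ :=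
      (hjoint n hn).trans (by linarith [hρ n (le_of_lt hn)])
    calc _ ≤ (∑ x, ∑ a, |μ n x a - μ' n x a|) * rmax := by rw [← h2]; exact h1
      _ ≤ ((n : ℝ) * δ + δ) * rmax := mul_le_mul_of_nonneg_right h3 hrmax
      _ = ((n : ℝ) + 1) * δ * rmax := by ring
  rw [← Finset.sum_sub_distrib]
  calc |∑ n ∈ Finset.range H, ((∑ x, ∑ a, μ n x a * r x a n) -
        (∑ x, ∑ a, μ' n x a * r x a n))|
      ≤ ∑ n ∈ Finset.range H, ((n : ℝ) + 1) * δ * rmax := by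
        refine (Finset.abs_sum_le_sum_abs _ _).trans (Finset.sum_le_sum fun n hn => ?_)
        exact hstep n (Finset.mem_range.mp hn)
    _ = (∑ n ∈ Finset.range H, ((n : ℝ) + 1)) * (δ * rmax) := by
        rw [Finset.sum_mul]; exact Finset.sum_congr rfl fun n _ => by ring
    _ ≤ (H : ℝ) ^ 2 * (δ * rmax) := by
        refine mul_le_mul_of_nonneg_right ?_ (by positivity)
        have : ∑ n ∈ Finset.range H, ((n : ℝ) + 1) = ∑ n ∈ Finset.range H, ((n + 1 : ℕ) : ℝ) := by
          push_cast; rfl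
        rw [this, ← Nat.cast_sum]
        have hs : ∑ n ∈ Finset.range H, (n + 1) ≤ H * H := by
          calc ∑ n ∈ Finset.range H, (n + 1) ≤ ∑ _n ∈ Finset.range H, H :=
                Finset.sum_le_sum fun n hn => Finset.mem_range.mp hn
            _ = H * H := by simp [Finset.sum_const, Nat.mul_comm]
        calc ((∑ n ∈ Finset.range H, (n + 1) : ℕ) : ℝ) ≤ ((H * H : ℕ) : ℝ) := by
              exact_mod_cast hs
          _ = (H : ℝ) ^ 2 := by push_cast; ring
    _ = (H : ℝ) ^ 2 * δ * rmax := by ring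
end

section
/- Let X, A be finite sets. Let ρ be a probability measure on X, π^E, π^A kernels from X to distributions on A, and P a stochastic kernel from X × A × Δ(X) to Δ(X), where ρ-entries influence P. Assume P is L_P-Lipschitz in its distribution argument in L1: for all x, a and distributions ρ₁, ρ₂, ∑_{x'} |P(x'|x,a,ρ₁) − P(x'|x,a,ρ₂)| ≤ L_P·∑_x |ρ₁(x) − ρ₂(x)|. Let ρ₁, ρ₂ be two distributions on X, and let ν_i(x') = ∑_{x,a} ρ_i(x)π^i(a|x,ρ_i)P(x'|x,a,ρ_i) for i = 1,2 with π¹ = π^A evaluated at ρ₁ and π² = π^E evaluated at ρ₂, where π^A is L_E-Lipschitz in the distribution argument: ∑_x ρ₂(x)∑_a |π^A(a|x,ρ₁) − π^A(a|x,ρ₂)| ≤ L_E·∑_x|ρ₁(x) − ρ₂(x)|. Assume the instantaneous imitation error δ := ∑_x ρ₂(x)∑_a |π^A(a|x,ρ₂) − π^E(a|x,ρ₂)|. Then ∑_{x'} |ν₁(x') − ν₂(x')| ≤ (1 + L_E + L_P)·∑_x |ρ₁(x) − ρ₂(x)| + δ. -/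
/-!
Write `Kᵢ x x' = ∑ a, πᵢ(a|x) P(x'|x,a,ρᵢ)`, so that `νᵢ = ∑ x, ρᵢ x • Kᵢ x` and
`ν₁ - ν₂ = ∑ x, (ρ₁ - ρ₂) x • K₁ x + ∑ x, ρ₂ x • (K₁ x - K₂ x)`. A stochastic kernel does not
increase L1 distance, so the first term costs `‖ρ₁ - ρ₂‖₁`. The same split one level down, over
actions, bounds `‖K₁ x - K₂ x‖₁` by the policy gap `‖πA(ρ₁) - πE(ρ₂)‖₁ ≤ ‖πA(ρ₁) - πA(ρ₂)‖₁ +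
‖πA(ρ₂) - πE(ρ₂)‖₁` plus `L_P ‖ρ₁ - ρ₂‖₁`; averaging under `ρ₂` gives `L_E`, `δ` and `L_P`.
-/

open Finset

structure IsStochastic {ι κ : Type*} [Fintype κ] (K : ι → κ → ℝ) : Prop where
  nonneg : ∀ i k, 0 ≤ K i k
  sum_eq_one : ∀ i, ∑ k, K i k = 1

namespace IsStochastic

variable {ι α κ : Type*} [Fintype α] [Fintype κ]

theorem sum_abs_eq_one {K : ι → κ → ℝ} (hK : IsStochastic K) (i : ι) :
    ∑ k, |K i k| = 1 := by
  simp_rw [abs_of_nonneg (hK.nonneg i _)]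
  exact hK.sum_eq_one i

theorem comp {π : ι → α → ℝ} {P : ι → α → κ → ℝ} (hπ : IsStochastic π)
    (hP : ∀ i, IsStochastic (P i)) :
    IsStochastic fun i k => ∑ a, π i a * P i a k where
  nonneg i k := sum_nonneg fun a _ => mul_nonneg (hπ.nonneg i a) ((hP i).nonneg a k)
  sum_eq_one i := by
    rw [sum_comm]
    simp_rw [← mul_sum, (hP i).sum_eq_one, mul_one]
    exact hπ.sum_eq_one i

end IsStochastic

section L1

variable {ι κ : Type*} [Fintype ι] [Fintype κ]

theorem sum_abs_sum_mul_le (f : ι → ℝ) (K : ι → κ → ℝ) :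
    ∑ k, |∑ i, f i * K i k| ≤ ∑ i, |f i| * ∑ k, |K i k| :=
  calc ∑ k, |∑ i, f i * K i k|
      ≤ ∑ k, ∑ i, |f i| * |K i k| :=
        sum_le_sum fun k _ => (abs_sum_le_sum_abs _ _).trans_eq (by simp_rw [abs_mul])
    _ = ∑ i, |f i| * ∑ k, |K i k| := by rw [sum_comm]; simp_rw [mul_sum]

theorem sum_abs_mixture_sub_le {p q : ι → ℝ} {K L : ι → κ → ℝ} (hq : ∀ i, 0 ≤ q i)
    (hK : IsStochastic K) :
    ∑ k, |∑ i, p i * K i k - ∑ i, q i * L i k| ≤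
      ∑ i, |p i - q i| + ∑ i, q i * ∑ k, |K i k - L i k| := by
  have hsplit : ∀ k, ∑ i, p i * K i k - ∑ i, q i * L i k =
      ∑ i, (p i - q i) * K i k + ∑ i, q i * (K i k - L i k) := fun k => by
    rw [← sum_sub_distrib, ← sum_add_distrib]
    exact sum_congr rfl fun i _ => by ring
  calc ∑ k, |∑ i, p i * K i k - ∑ i, q i * L i k|
      ≤ ∑ k, |∑ i, (p i - q i) * K i k| + ∑ k, |∑ i, q i * (K i k - L i k)| := by
        rw [← sum_add_distrib]
        exact sum_le_sum fun k _ => (hsplit k).symm ▸ abs_add_le _ _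
    _ ≤ ∑ i, |p i - q i| * ∑ k, |K i k| + ∑ i, |q i| * ∑ k, |K i k - L i k| :=
        add_le_add (sum_abs_sum_mul_le _ _) (sum_abs_sum_mul_le _ _)
    _ = ∑ i, |p i - q i| + ∑ i, q i * ∑ k, |K i k - L i k| := by
        simp_rw [hK.sum_abs_eq_one, mul_one, abs_of_nonneg (hq _)]

end L1

theorem one_step_meanfield_propagation_general {X A : Type*} [Fintype X] [Fintype A]
    (LP LE δ : ℝ)
    (ρ₁ ρ₂ : X → ℝ)
    (πA πE : X → (X → ℝ) → A → ℝ)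
    (P : X → A → (X → ℝ) → X → ℝ)
    (hρ₂ : ∀ x, 0 ≤ ρ₂ x) (hρ₂s : ∑ x, ρ₂ x = 1)
    (hπA : ∀ x ρ a, 0 ≤ πA x ρ a) (hπAs : ∀ x ρ, ∑ a, πA x ρ a = 1)
    (hπE : ∀ x ρ a, 0 ≤ πE x ρ a) (hπEs : ∀ x ρ, ∑ a, πE x ρ a = 1)
    (hP : ∀ x a ρ, (∀ x', 0 ≤ P x a ρ x') ∧ ∑ x', P x a ρ x' = 1)
    (hPLip : ∀ x a (σ₁ σ₂ : X → ℝ),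
      ∑ x', |P x a σ₁ x' - P x a σ₂ x'| ≤ LP * ∑ y, |σ₁ y - σ₂ y|)
    (hπALip : ∑ x, ρ₂ x * ∑ a, |πA x ρ₁ a - πA x ρ₂ a| ≤
      LE * ∑ y, |ρ₁ y - ρ₂ y|)
    (hδ : δ = ∑ x, ρ₂ x * ∑ a, |πA x ρ₂ a - πE x ρ₂ a|) :
    ∑ x', |(∑ x, ∑ a, ρ₁ x * πA x ρ₁ a * P x a ρ₁ x') -
           (∑ x, ∑ a, ρ₂ x * πE x ρ₂ a * P x a ρ₂ x')| ≤
      (1 + LE + LP) * ∑ y, |ρ₁ y - ρ₂ y| + δ := by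
  set D := ∑ y, |ρ₁ y - ρ₂ y|
  have hPρ₁ : ∀ x, IsStochastic fun a => P x a ρ₁ := fun x =>
    ⟨fun a => (hP x a ρ₁).1, fun a => (hP x a ρ₁).2⟩
  have hK₁ : IsStochastic fun x x' => ∑ a, πA x ρ₁ a * P x a ρ₁ x' :=
    IsStochastic.comp ⟨fun x => hπA x ρ₁, fun x => hπAs x ρ₁⟩ hPρ₁
  have hkernel : ∀ x, ∑ x', |∑ a, πA x ρ₁ a * P x a ρ₁ x' - ∑ a, πE x ρ₂ a * P x a ρ₂ x'| ≤
      ∑ a, |πA x ρ₁ a - πA x ρ₂ a| + ∑ a, |πA x ρ₂ a - πE x ρ₂ a| + LP * D := fun x =>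
    calc _ ≤ ∑ a, |πA x ρ₁ a - πE x ρ₂ a| +
          ∑ a, πE x ρ₂ a * ∑ x', |P x a ρ₁ x' - P x a ρ₂ x'| :=
          sum_abs_mixture_sub_le (hπE x ρ₂) (hPρ₁ x)
      _ ≤ ∑ a, (|πA x ρ₁ a - πA x ρ₂ a| + |πA x ρ₂ a - πE x ρ₂ a|) +
          ∑ a, πE x ρ₂ a * (LP * D) := by
          gcongr with a _ a
          · exact abs_sub_le _ _ _
          · exact hπE x ρ₂ a
          · exact hPLip x a ρ₁ ρ₂
      _ = _ := by rw [sum_add_distrib, ← sum_mul, hπEs, one_mul]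
  simp_rw [mul_assoc, ← mul_sum]
  calc _ ≤ D + ∑ x, ρ₂ x * ∑ x', |∑ a, πA x ρ₁ a * P x a ρ₁ x' -
          ∑ a, πE x ρ₂ a * P x a ρ₂ x'| := sum_abs_mixture_sub_le hρ₂ hK₁
    _ ≤ D + ∑ x, ρ₂ x * (∑ a, |πA x ρ₁ a - πA x ρ₂ a| + ∑ a, |πA x ρ₂ a - πE x ρ₂ a| +
          LP * D) := by gcongr with x; exacts [hρ₂ x, hkernel x]
    _ = D + (∑ x, ρ₂ x * ∑ a, |πA x ρ₁ a - πA x ρ₂ a|) + δ + LP * D := by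
          simp_rw [mul_add, sum_add_distrib, ← sum_mul, hρ₂s, one_mul, hδ, add_assoc]
    _ ≤ (1 + LE + LP) * D + δ := by linarith

theorem one_step_meanfield_propagation {X A : Type*} [Fintype X] [Fintype A]
    (LP LE δ : ℝ)
    (ρ₁ ρ₂ : X → ℝ)
    (πA πE : X → (X → ℝ) → A → ℝ)
    (P : X → A → (X → ℝ) → X → ℝ)
    (hρ₁ : ∀ x, 0 ≤ ρ₁ x) (hρ₁s : ∑ x, ρ₁ x = 1)
    (hρ₂ : ∀ x, 0 ≤ ρ₂ x) (hρ₂s : ∑ x, ρ₂ x = 1)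
    (hπA : ∀ x ρ a, 0 ≤ πA x ρ a) (hπAs : ∀ x ρ, ∑ a, πA x ρ a = 1)
    (hπE : ∀ x ρ a, 0 ≤ πE x ρ a) (hπEs : ∀ x ρ, ∑ a, πE x ρ a = 1)
    (hP : ∀ x a ρ, (∀ x', 0 ≤ P x a ρ x') ∧ ∑ x', P x a ρ x' = 1)
    (hPLip : ∀ x a (σ₁ σ₂ : X → ℝ),
      ∑ x', |P x a σ₁ x' - P x a σ₂ x'| ≤ LP * ∑ y, |σ₁ y - σ₂ y|)
    (hπALip : ∑ x, ρ₂ x * ∑ a, |πA x ρ₁ a - πA x ρ₂ a| ≤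
      LE * ∑ y, |ρ₁ y - ρ₂ y|)
    (hδ : δ = ∑ x, ρ₂ x * ∑ a, |πA x ρ₂ a - πE x ρ₂ a|) :
    ∑ x', |(∑ x, ∑ a, ρ₁ x * πA x ρ₁ a * P x a ρ₁ x') -
           (∑ x, ∑ a, ρ₂ x * πE x ρ₂ a * P x a ρ₂ x')| ≤
      (1 + LE + LP) * ∑ y, |ρ₁ y - ρ₂ y| + δ :=
  one_step_meanfield_propagation_general LP LE δ ρ₁ ρ₂ πA πE P hρ₂ hρ₂s hπA hπAs hπE hπEs hP hPLip
    hπALip hδ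
end
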